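/- For every real m > -1 and every fixed real x > 0, the function a ↦ a · V_m(a x) is strictly increasing on (0, ∞). Consequently a · V_m(a x) > V_m(x) when a > 1 and a · V_m(a x) < V_m(x) when 0 < a < 1; in particular (1/√2) V_m(|x|/√2) < V_m(|x|). -/

import Mathlib

open MeasureTheory Real Set

/-- The one-dimensional regularized Coulomb potential `V_m(x)`. -/
noncomputable def V (m x : ℝ) : ℝ :=
  (1 / Real.Gamma (m + 1)) *
    ∫ u in Set.Ioi (0:ℝ), u ^ m * Real.exp (-u) / Real.sqrt (x ^ 2 + u)

/-!
Substituting the scale into the square root, `a * V_m (a x)` is `Γ(m+1)⁻¹` times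
`∫₀^∞ uᵐ e^{-u} / √(x² + u / a²) du`. As `a` grows, `u / a²` shrinks for every `u > 0`, so the
integrand grows pointwise and the integral grows strictly. The three inequalities are this
monotonicity compared at `a = 1`.
-/

theorem setIntegral_lt_setIntegral_of_forall_lt {α : Type*} [MeasurableSpace α] {μ : Measure α}
    {s : Set α} {f g : α → ℝ} (hs : MeasurableSet s) (hμs : μ s ≠ 0)
    (hf : IntegrableOn f s μ) (hg : IntegrableOn g s μ) (hlt : ∀ x ∈ s, f x < g x) :
    ∫ x in s, f x ∂μ < ∫ x in s, g x ∂μ := by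
  rw [← sub_pos, ← integral_sub hg hf]
  refine (setIntegral_pos_iff_support_of_nonneg_ae ?_ (hg.sub hf)).2 ?_
  · filter_upwards [ae_restrict_mem hs] with x hx using sub_nonneg.2 (hlt x hx).le
  · have hsub : s ⊆ Function.support (fun x => g x - f x) ∩ s :=
      fun x hx => ⟨sub_ne_zero.2 (hlt x hx).ne', hx⟩
    exact (pos_iff_ne_zero.2 hμs).trans_le (measure_mono hsub)

theorem integrableOn_rpow_mul_exp_neg {m : ℝ} (hm : -1 < m) :
    IntegrableOn (fun u : ℝ => u ^ m * exp (-u)) (Ioi 0) := by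
  simpa [mul_comm] using GammaIntegral_convergent (s := m + 1) (by linarith)

section WeightedInverseSqrt

variable {w : ℝ → ℝ} {x : ℝ}

theorem integrableOn_div_sqrt_sq_add_mul (hw : IntegrableOn w (Ioi 0)) (hx : 0 < x) {r : ℝ}
    (hr : 0 ≤ r) : IntegrableOn (fun u => w u / √(x ^ 2 + r * u)) (Ioi 0) := by
  simp only [div_eq_mul_inv]
  refine hw.mul_bdd (c := x⁻¹) (by fun_prop) ?_
  filter_upwards [ae_restrict_mem measurableSet_Ioi] with u (hu : 0 < u)
  have hx_le : x ≤ √(x ^ 2 + r * u) :=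
    le_sqrt_of_sq_le (le_add_of_nonneg_right (mul_nonneg hr hu.le))
  rw [norm_inv, norm_of_nonneg (sqrt_nonneg _)]
  exact inv_anti₀ hx hx_le

theorem strictAntiOn_integral_div_sqrt_sq_add_mul (hw : IntegrableOn w (Ioi 0))
    (hw_pos : ∀ u ∈ Ioi (0 : ℝ), 0 < w u) (hx : 0 < x) :
    StrictAntiOn (fun r => ∫ u in Ioi 0, w u / √(x ^ 2 + r * u)) (Ici 0) := by
  intro r (hr : 0 ≤ r) s (hs : 0 ≤ s) hrs
  refine setIntegral_lt_setIntegral_of_forall_lt measurableSet_Ioi (by simp)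
    (integrableOn_div_sqrt_sq_add_mul hw hx hs) (integrableOn_div_sqrt_sq_add_mul hw hx hr) ?_
  intro u (hu : 0 < u)
  have hpos : 0 < x ^ 2 + r * u := by positivity
  have hsqrt : √(x ^ 2 + r * u) < √(x ^ 2 + s * u) :=
    sqrt_lt_sqrt hpos.le (by gcongr)
  exact div_lt_div_of_pos_left (hw_pos u hu) (sqrt_pos.2 hpos) hsqrt

end WeightedInverseSqrt

theorem mul_V_mul_eq (m : ℝ) {a x : ℝ} (ha : 0 < a) :
    a * V m (a * x) =
      1 / Gamma (m + 1) * ∫ u in Ioi 0, u ^ m * exp (-u) / √(x ^ 2 + a⁻¹ ^ 2 * u) := by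
  rw [V, mul_left_comm, ← integral_const_mul]
  congr 1
  refine setIntegral_congr_fun measurableSet_Ioi fun u (hu : 0 < u) => ?_
  have hsqrt : √(x ^ 2 + a⁻¹ ^ 2 * u) = √((a * x) ^ 2 + u) / a := by
    rw [show x ^ 2 + a⁻¹ ^ 2 * u = ((a * x) ^ 2 + u) / a ^ 2 by field_simp,
      sqrt_div' _ (sq_nonneg a), sqrt_sq ha.le]
  rw [hsqrt, div_div_eq_mul_div]
  ring

theorem scaled_V_strictMono (m x : ℝ) (hm : -1 < m) (hx : 0 < x) :
    StrictMonoOn (fun a => a * V m (a * x)) (Set.Ioi 0) ∧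
    (∀ a : ℝ, 1 < a → V m x < a * V m (a * x)) ∧
    (∀ a : ℝ, 0 < a → a < 1 → a * V m (a * x) < V m x) ∧
    (1 / Real.sqrt 2) * V m (|x| / Real.sqrt 2) < V m |x| := by
  have hmono : StrictMonoOn (fun a => a * V m (a * x)) (Ioi 0) := by
    intro a (ha : 0 < a) b (hb : 0 < b) hab
    simp only [mul_V_mul_eq m ha, mul_V_mul_eq m hb]
    have hΓ : 0 < Gamma (m + 1) := Gamma_pos_of_pos (by linarith)
    have hw_pos (u : ℝ) (hu : u ∈ Ioi (0 : ℝ)) : 0 < u ^ m * exp (-u) :=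
      mul_pos (rpow_pos_of_pos hu m) (exp_pos _)
    gcongr
    exact strictAntiOn_integral_div_sqrt_sq_add_mul (integrableOn_rpow_mul_exp_neg hm) hw_pos hx
      (mem_Ici.2 (sq_nonneg _)) (mem_Ici.2 (sq_nonneg _)) (by gcongr)
  have hgt (a : ℝ) (ha : 1 < a) : V m x < a * V m (a * x) := by
    simpa using hmono (mem_Ioi.2 one_pos) (mem_Ioi.2 (one_pos.trans ha)) ha
  have hlt (a : ℝ) (ha₀ : 0 < a) (ha₁ : a < 1) : a * V m (a * x) < V m x := by
    simpa using hmono (mem_Ioi.2 ha₀) (mem_Ioi.2 one_pos) ha₁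
  refine ⟨hmono, hgt, hlt, ?_⟩
  have hsqrt2 : 1 < √2 := lt_sqrt_of_sq_lt (by norm_num)
  rw [abs_of_pos hx, div_eq_mul_one_div x, mul_comm _ (1 / √2)]
  exact hlt _ (by positivity) ((div_lt_one (one_pos.trans hsqrt2)).2 hsqrt2)
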